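/- arXiv:2309.00065 — 2 statements merged into one kernel-verified Lean document; each statement's English description precedes it below -/
import Mathlib

section
/- For β ≥ 0 let f(β) denote the unique root R̄ > 0 of F(R̄, β) = 0. Then f(0) = R₁, where R₁ > 0 is the unique positive solution of cosh(√λ(1−α)·R₁)/cosh(√λ·R₁) = c̄/c_B, and f is strictly decreasing: if 0 ≤ β₁ < β₂ then f(β₁) > f(β₂). -/
/-!
With `u_β t = cosh t + β sinh t`, `a = √λ` and `b = √λ (1 - α)`, the equation `F(R̄, β) = 0`
says `q_β R̄ = c̄ / c_B` for the ratio `q_β R = u_β (b R) / u_β (a R)`. For `β ≥ 0` this ratio is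
strictly decreasing in `R ≥ 0`: the sign of its derivative reduces to `b < a`, to
`cosh ((a + b) R) > 0` and to the fact that `tanh t / t` decreases. For fixed `R > 0` it is also
strictly decreasing in `β`, since the `β`-derivative has the sign of `-sinh ((a - b) R)`. The first
property makes the root unique, so `f 0 = R₁`; with the second, raising `β` pushes `q_β (f β₁)`
below the level `c̄ / c_B`, so the new root lies to the left.
-/

/-- The transcendental function `F(R̄, β)` from the necrotic-core system. -/
noncomputable def Fnec (lam cbar cB alpha Rbar beta : ℝ) : ℝ :=
  cbar / cB * (Real.cosh (Real.sqrt lam * Rbar) + beta * Real.sinh (Real.sqrt lam * Rbar)) -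
    (Real.cosh (Real.sqrt lam * (1 - alpha) * Rbar) +
      beta * Real.sinh (Real.sqrt lam * (1 - alpha) * Rbar))

open Real Set

noncomputable def coshAddMulSinh (β t : ℝ) : ℝ := cosh t + β * sinh t

lemma coshAddMulSinh_pos {β t : ℝ} (hβ : 0 ≤ β) (ht : 0 ≤ t) : 0 < coshAddMulSinh β t := by
  unfold coshAddMulSinh
  have := cosh_pos t
  positivity

lemma hasDerivAt_coshAddMulSinh_const_mul (β c x : ℝ) :
    HasDerivAt (fun y => coshAddMulSinh β (c * y)) (c * (sinh (c * x) + β * cosh (c * x))) x :=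
  ((hasDerivAt_const_mul c).cosh.add ((hasDerivAt_const_mul c).sinh.const_mul β)).congr_deriv
    (by ring)

section
variable {a b : ℝ}

/-- `tanh t / t` is strictly decreasing on `(0, ∞)`, with denominators cleared. -/
lemma mul_cosh_mul_sinh_lt_mul_sinh_mul_cosh (hb : 0 < b) (hba : b < a) {x : ℝ} (hx : 0 < x) :
    b * cosh (b * x) * sinh (a * x) < a * sinh (b * x) * cosh (a * x) := by
  set g : ℝ → ℝ := fun y => a * sinh (b * y) * cosh (a * y) - b * cosh (b * y) * sinh (a * y)
  have hg : ∀ y, HasDerivAt g ((a ^ 2 - b ^ 2) * (sinh (b * y) * sinh (a * y))) y := fun y =>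
    ((((hasDerivAt_const_mul b).sinh.const_mul a).mul (hasDerivAt_const_mul a).cosh).sub
      (((hasDerivAt_const_mul b).cosh.const_mul b).mul (hasDerivAt_const_mul a).sinh)).congr_deriv
      (by ring)
  have hmono : StrictMonoOn g (Ici 0) := by
    refine strictMonoOn_of_hasDerivWithinAt_pos (convex_Ici 0)
      (fun y _ => (hg y).continuousAt.continuousWithinAt) (fun y _ => (hg y).hasDerivWithinAt) ?_
    rw [interior_Ici]
    intro y (hy : 0 < y)
    have : 0 < a ^ 2 - b ^ 2 := by nlinarith
    have : 0 < a := hb.trans hba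
    positivity
  have := hmono self_mem_Ici hx.le hx
  simp only [g, mul_zero, sinh_zero, cosh_zero] at this
  linarith

lemma mul_sinhAddMulCosh_mul_lt {β : ℝ} (hb : 0 < b) (hba : b < a) (hβ : 0 ≤ β) {x : ℝ}
    (hx : 0 < x) :
    b * (sinh (b * x) + β * cosh (b * x)) * coshAddMulSinh β (a * x) <
      a * coshAddMulSinh β (b * x) * (sinh (a * x) + β * cosh (a * x)) := by
  have hab : 0 < a - b := sub_pos.2 hba
  have hsub : sinh ((a - b) * x) = sinh (a * x) * cosh (b * x) - cosh (a * x) * sinh (b * x) := by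
    rw [sub_mul, sinh_sub]
  have hadd : cosh ((a + b) * x) = cosh (a * x) * cosh (b * x) + sinh (a * x) * sinh (b * x) := by
    rw [add_mul, cosh_add]
  have h₀ : 0 < (a - b) * cosh (b * x) * sinh (a * x) + b * sinh ((a - b) * x) := by
    have := cosh_pos (b * x)
    have : 0 < a := hb.trans hba
    positivity
  have h₁ : 0 ≤ β * (a - b) * cosh ((a + b) * x) := by
    have := cosh_pos ((a + b) * x)
    positivity
  have h₂ : 0 ≤ β ^ 2 * (a * sinh (b * x) * cosh (a * x) - b * cosh (b * x) * sinh (a * x)) :=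
    mul_nonneg (sq_nonneg β) (sub_nonneg.2 (mul_cosh_mul_sinh_lt_mul_sinh_mul_cosh hb hba hx).le)
  rw [hsub] at h₀
  rw [hadd] at h₁
  unfold coshAddMulSinh
  linear_combination h₀ + h₁ + h₂

noncomputable def coshRatio (a b β x : ℝ) : ℝ := coshAddMulSinh β (b * x) / coshAddMulSinh β (a * x)

lemma strictAntiOn_coshRatio {β : ℝ} (hb : 0 < b) (hba : b < a) (hβ : 0 ≤ β) :
    StrictAntiOn (coshRatio a b β) (Ici 0) := by
  have hden : ∀ x ∈ Ici (0 : ℝ), coshAddMulSinh β (a * x) ≠ 0 := fun x hx =>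
    (coshAddMulSinh_pos hβ (mul_nonneg (hb.trans hba).le hx)).ne'
  have hderiv : ∀ x ∈ Ici (0 : ℝ), HasDerivAt (coshRatio a b β)
      ((b * (sinh (b * x) + β * cosh (b * x)) * coshAddMulSinh β (a * x) -
          coshAddMulSinh β (b * x) * (a * (sinh (a * x) + β * cosh (a * x)))) /
        coshAddMulSinh β (a * x) ^ 2) x := fun x hx =>
    (hasDerivAt_coshAddMulSinh_const_mul β b x).div (hasDerivAt_coshAddMulSinh_const_mul β a x)
      (hden x hx)
  refine strictAntiOn_of_hasDerivWithinAt_neg (convex_Ici 0)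
    (fun x hx => (hderiv x hx).continuousAt.continuousWithinAt)
    (fun x hx => (hderiv x (interior_subset hx)).hasDerivWithinAt) ?_
  rw [interior_Ici]
  intro x (hx : 0 < x)
  have : 0 < a := hb.trans hba
  refine div_neg_of_neg_of_pos ?_ (pow_pos (coshAddMulSinh_pos hβ (by positivity)) 2)
  linarith [mul_sinhAddMulCosh_mul_lt hb hba hβ hx]

lemma coshRatio_lt_of_lt {β₁ β₂ : ℝ} (hb : 0 < b) (hba : b < a) (hβ₁ : 0 ≤ β₁) (hβ : β₁ < β₂)
    {x : ℝ} (hx : 0 < x) : coshRatio a b β₂ x < coshRatio a b β₁ x := by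
  have ha : 0 < a := hb.trans hba
  have hsub : sinh ((a - b) * x) = sinh (a * x) * cosh (b * x) - cosh (a * x) * sinh (b * x) := by
    rw [sub_mul, sinh_sub]
  have : 0 < (β₂ - β₁) * sinh ((a - b) * x) := by
    have := sub_pos.2 hba
    have := sub_pos.2 hβ
    positivity
  rw [coshRatio, coshRatio, div_lt_div_iff₀ (coshAddMulSinh_pos (hβ₁.trans hβ.le) (by positivity))
    (coshAddMulSinh_pos hβ₁ (by positivity))]
  rw [hsub] at this
  unfold coshAddMulSinh
  linear_combination this

end

lemma Fnec_eq_zero_iff {lam cbar cB alpha R β : ℝ} (hR : 0 ≤ R) (hβ : 0 ≤ β) :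
    Fnec lam cbar cB alpha R β = 0 ↔ coshRatio (√lam) (√lam * (1 - alpha)) β R = cbar / cB := by
  rw [coshRatio, div_eq_iff (coshAddMulSinh_pos hβ (by positivity)).ne', Fnec, sub_eq_zero, eq_comm]
  rfl

theorem stmt_7_general (lam cbar cB alpha : ℝ) (hlam : 0 < lam)
    (halpha : alpha ∈ Set.Ioo (0 : ℝ) 1) (f : ℝ → ℝ)
    (hf : ∀ beta, 0 ≤ beta → 0 < f beta ∧ Fnec lam cbar cB alpha (f beta) beta = 0)
    (R₁ : ℝ) (hR₁pos : 0 < R₁)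
    (hR₁ : Real.cosh (Real.sqrt lam * (1 - alpha) * R₁) / Real.cosh (Real.sqrt lam * R₁)
      = cbar / cB) :
    f 0 = R₁ ∧ ∀ beta₁ beta₂, 0 ≤ beta₁ → beta₁ < beta₂ → f beta₂ < f beta₁ := by
  obtain ⟨hα₀, hα₁⟩ := halpha
  have hb : 0 < √lam * (1 - alpha) := mul_pos (sqrt_pos.2 hlam) (sub_pos.2 hα₁)
  have hba : √lam * (1 - alpha) < √lam := mul_lt_of_lt_one_right (sqrt_pos.2 hlam) (by linarith)
  have hroot : ∀ β, 0 ≤ β → 0 < f β ∧ coshRatio (√lam) (√lam * (1 - alpha)) β (f β) = cbar / cB :=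
    fun β hβ => ⟨(hf β hβ).1, (Fnec_eq_zero_iff (hf β hβ).1.le hβ).1 (hf β hβ).2⟩
  refine ⟨(strictAntiOn_coshRatio hb hba le_rfl).injOn (hroot 0 le_rfl).1.le hR₁pos.le ?_, ?_⟩
  · rw [(hroot 0 le_rfl).2, ← hR₁]
    simp [coshRatio, coshAddMulSinh]
  · intro β₁ β₂ hβ₁ hβ
    have hβ₂ : 0 ≤ β₂ := hβ₁.trans hβ.le
    obtain ⟨hpos₁, hroot₁⟩ := hroot β₁ hβ₁
    obtain ⟨hpos₂, hroot₂⟩ := hroot β₂ hβ₂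
    refine ((strictAntiOn_coshRatio hb hba hβ₂).lt_iff_gt hpos₁.le hpos₂.le).1 ?_
    calc coshRatio _ _ β₂ (f β₁) < coshRatio _ _ β₁ (f β₁) := coshRatio_lt_of_lt hb hba hβ₁ hβ hpos₁
      _ = coshRatio _ _ β₂ (f β₂) := by rw [hroot₁, hroot₂]

/-- If `f β` denotes the unique positive root `R̄` of `F(R̄, β) = 0`, then `f 0 = R₁`
(the unique positive solution of `cosh (√λ (1-α) R₁) / cosh (√λ R₁) = c̄ / c_B`)
and `f` is strictly decreasing on `[0, ∞)`. -/
theorem stmt_7 (lam cbar cB alpha : ℝ) (hlam : 0 < lam) (hcbar : 0 < cbar) (hc : cbar < cB)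
    (halpha : alpha ∈ Set.Ioo (0 : ℝ) 1) (f : ℝ → ℝ)
    (hf : ∀ beta, 0 ≤ beta → 0 < f beta ∧ Fnec lam cbar cB alpha (f beta) beta = 0)
    (R₁ : ℝ) (hR₁pos : 0 < R₁)
    (hR₁ : Real.cosh (Real.sqrt lam * (1 - alpha) * R₁) / Real.cosh (Real.sqrt lam * R₁)
      = cbar / cB) :
    f 0 = R₁ ∧ ∀ beta₁ beta₂, 0 ≤ beta₁ → beta₁ < beta₂ → f beta₂ < f beta₁ :=
  stmt_7_general lam cbar cB alpha hlam halpha f hf R₁ hR₁pos hR₁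
end

section
/- Let λ > 0, 0 < c̄ < c_B, α ∈ (0,1), n_c ∈ (0,1). For each R > R₁ let (r(R), R̄(R), β(R)) denote the unique solution with 0 < r(R) < R of the system F(R̄, β) = 0, β = √n_c · tanh(√λ · r), r + R̄ = R. Then r(R) is strictly increasing on (R₁, ∞) with r(R) → 0 as R → R₁⁺, and R̄(R) = R − r(R) is strictly decreasing on (R₁, ∞). -/
/-!
Write `a = √λ`, `b = √λ (1 - α)`, `c = c̄ / c_B`, `k = √n_c` and `β = tanh s`. Then `F(R̄, β) = 0`
says `cosh y = c cosh x` with `y = b R̄ + s`, `x = a R̄ + s`, and along the solutions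
`s = artanh (k tanh (a r))`. On this level set the gap `x - y = (a - b) R̄` strictly decreases as
`y` grows, because `cosh (y + d) / cosh y = cosh d + sinh d tanh y` increases with `y`. As `s`
grows with `r`, this makes `R̄` decrease when `r` grows; as `a r - s` also grows with `r`, the
total radius `R = r + R̄` grows with `r`, which is the monotonicity of `r(R)`. Finally the
solution curve is closed, so the limit `L` of `r` at `R₁⁺` gives a solution `(L, R₁ - L)` with the
same total radius as `(0, R₁)`, forcing `L = 0`.
-/

open Real Set Filter Topology

namespace Real

lemma tanh_strictMono : StrictMono tanh := fun x y h => by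
  have mem : ∀ z, tanh z ∈ Ioo (-1) 1 := fun z => ⟨neg_one_lt_tanh z, tanh_lt_one z⟩
  rwa [← artanh_lt_artanh_iff (mem x) (mem y), artanh_tanh, artanh_tanh]

lemma tanh_nonneg {x : ℝ} (hx : 0 ≤ x) : 0 ≤ tanh x := by
  simpa using tanh_strictMono.monotone hx

@[fun_prop]
lemma continuous_tanh : Continuous tanh := by
  rw [show tanh = fun x => sinh x / cosh x from funext tanh_eq_sinh_div_cosh]
  exact continuous_sinh.div continuous_cosh fun x => (cosh_pos x).ne'

lemma continuousOn_artanh : ContinuousOn artanh (Ioo (-1) 1) := by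
  intro x hx
  have h₁ : 1 - x ≠ 0 := by linarith [hx.2]
  have h₂ : √((1 + x) / (1 - x)) ≠ 0 :=
    (sqrt_pos.mpr (div_pos (by linarith [hx.1]) (by linarith [hx.2]))).ne'
  unfold artanh
  fun_prop (disch := assumption)

end Real

lemma cosh_add_tanh_mul_sinh (A s : ℝ) : cosh A + tanh s * sinh A = cosh (A + s) / cosh s := by
  rw [tanh_eq_sinh_div_cosh, cosh_add]
  field_simp [(cosh_pos s).ne']

lemma sub_lt_sub_of_cosh_eq_mul_cosh {c x y x' y' : ℝ} (hy : 0 ≤ y) (hyy' : y < y')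
    (hyx : y < x) (h : cosh y = c * cosh x) (h' : cosh y' = c * cosh x') : x' - y' < x - y := by
  by_contra! hd
  have hratio : cosh x / cosh y = cosh x' / cosh y' := by
    rw [div_eq_div_iff (cosh_pos y).ne' (cosh_pos y').ne', h, h']
    ring
  have hsinh : 0 < sinh (x - y) := sinh_pos_iff.mpr (sub_pos.mpr hyx)
  have hcosh : cosh (x - y + y') ≤ cosh x' := by
    rw [cosh_le_cosh, abs_of_nonneg (by linarith), abs_of_nonneg (by linarith)]
    linarith
  have : cosh x / cosh y < cosh x' / cosh y' := calc
    cosh x / cosh y = cosh (x - y) + tanh y * sinh (x - y) := by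
      rw [cosh_add_tanh_mul_sinh, sub_add_cancel]
    _ < cosh (x - y) + tanh y' * sinh (x - y) := by
      gcongr
      exact tanh_strictMono hyy'
    _ = cosh (x - y + y') / cosh y' := cosh_add_tanh_mul_sinh _ _
    _ ≤ cosh x' / cosh y' := by gcongr
  exact this.ne hratio

noncomputable def phaseShift (k u : ℝ) : ℝ := artanh (k * tanh u)

section PhaseShift
variable {k : ℝ}

lemma mul_tanh_mem_Ioo (hk : |k| ≤ 1) (u : ℝ) : k * tanh u ∈ Ioo (-1) 1 := by
  rw [mem_Ioo, ← abs_lt, abs_mul]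
  calc |k| * |tanh u| ≤ 1 * |tanh u| := by gcongr
    _ < 1 := by simpa using abs_tanh_lt_one u

lemma tanh_phaseShift (hk : |k| ≤ 1) (u : ℝ) : tanh (phaseShift k u) = k * tanh u :=
  tanh_artanh (mul_tanh_mem_Ioo hk u)

@[simp]
lemma phaseShift_zero (k : ℝ) : phaseShift k 0 = 0 := by simp [phaseShift]

lemma sinh_phaseShift_mul_cosh (hk : |k| ≤ 1) (u : ℝ) :
    sinh (phaseShift k u) * cosh u = k * sinh u * cosh (phaseShift k u) := by
  have := tanh_phaseShift hk u
  rw [tanh_eq_sinh_div_cosh, tanh_eq_sinh_div_cosh] at this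
  field_simp at this
  linarith

lemma continuous_phaseShift (hk : |k| ≤ 1) : Continuous (phaseShift k) :=
  continuousOn_artanh.comp_continuous (by fun_prop) (mul_tanh_mem_Ioo hk)

lemma phaseShift_nonneg (hk : 0 ≤ k) {u : ℝ} (hu : 0 ≤ u) : 0 ≤ phaseShift k u :=
  artanh_nonneg (mul_nonneg hk (tanh_nonneg hu))

lemma phaseShift_strictMono (hk₀ : 0 < k) (hk₁ : k ≤ 1) : StrictMono (phaseShift k) :=
  fun u v huv => strictMonoOn_artanh (mul_tanh_mem_Ioo (abs_le.mpr ⟨by linarith, hk₁⟩) u)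
    (mul_tanh_mem_Ioo (abs_le.mpr ⟨by linarith, hk₁⟩) v)
    (mul_lt_mul_of_pos_left (tanh_strictMono huv) hk₀)

lemma strictMono_sub_phaseShift (hk₀ : -1 ≤ k) (hk₁ : k < 1) :
    StrictMono fun u => u - phaseShift k u := by
  intro u' u hu
  set s := phaseShift k u
  set s' := phaseShift k u'
  have hk : |k| ≤ 1 := abs_le.mpr ⟨hk₀, hk₁.le⟩
  -- the last factor is `cosh u cosh u' + k sinh u sinh u'`, positive because `|k| ≤ 1`
  have key : sinh ((u - s) - (u' - s')) * (cosh u * cosh u') =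
      (1 - k) * cosh s * cosh s' * sinh (u - u') *
        ((1 + k) / 2 * cosh (u + u') + (1 - k) / 2 * cosh (u - u')) := by
    have hs : sinh s = k * sinh u * cosh s / cosh u := by
      rw [eq_div_iff (cosh_pos u).ne', sinh_phaseShift_mul_cosh hk]
    have hs' : sinh s' = k * sinh u' * cosh s' / cosh u' := by
      rw [eq_div_iff (cosh_pos u').ne', sinh_phaseShift_mul_cosh hk]
    rw [sinh_sub, sinh_sub u u', sinh_sub u s, cosh_sub u s, sinh_sub u' s', cosh_sub u' s',
      cosh_add, cosh_sub, hs, hs']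
    field_simp
    ring
  have hpos : 0 < (1 - k) * cosh s * cosh s' * sinh (u - u') *
      ((1 + k) / 2 * cosh (u + u') + (1 - k) / 2 * cosh (u - u')) := by
    have := sinh_pos_iff.mpr (sub_pos.mpr hu)
    have := cosh_pos (u + u')
    have := cosh_pos (u - u')
    have : 0 < (1 + k) / 2 * cosh (u + u') + (1 - k) / 2 * cosh (u - u') := by nlinarith
    have := cosh_pos s
    have := cosh_pos s'
    have : 0 < 1 - k := by linarith
    positivity
  rw [← key] at hpos
  have := sinh_pos_iff.mp (pos_of_mul_pos_left hpos (by positivity))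
  linarith

end PhaseShift

lemma Fnec_tanh (lam cbar cB alpha Rbar s : ℝ) : Fnec lam cbar cB alpha Rbar (tanh s) =
    (cbar / cB * cosh (√lam * Rbar + s) - cosh (√lam * (1 - alpha) * Rbar + s)) / cosh s := by
  rw [Fnec, cosh_add_tanh_mul_sinh, cosh_add_tanh_mul_sinh]
  ring

lemma Fnec_tanh_eq_zero_iff {lam cbar cB alpha Rbar s : ℝ} :
    Fnec lam cbar cB alpha Rbar (tanh s) = 0 ↔
      cosh (√lam * (1 - alpha) * Rbar + s) = cbar / cB * cosh (√lam * Rbar + s) := by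
  rw [Fnec_tanh, div_eq_zero_iff, or_iff_left (cosh_pos s).ne', sub_eq_zero, eq_comm]

/-- `(ρ, R̄)` is a core radius and shell width solving the system, with `β = tanh s` and
`s = phaseShift k (a ρ)`. -/
def OnCurve (a b c k ρ Rbar : ℝ) : Prop :=
  0 ≤ ρ ∧ 0 ≤ Rbar ∧
    cosh (b * Rbar + phaseShift k (a * ρ)) = c * cosh (a * Rbar + phaseShift k (a * ρ))

lemma isClosed_setOf_onCurve {a b c k : ℝ} (hk : |k| ≤ 1) :
    IsClosed {p : ℝ × ℝ | OnCurve a b c k p.1 p.2} := by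
  have := continuous_phaseShift hk
  exact (isClosed_le continuous_const continuous_fst).inter
    ((isClosed_le continuous_const continuous_snd).inter (isClosed_eq (by fun_prop) (by fun_prop)))

namespace OnCurve

variable {a b c k ρ ρ' Rbar Rbar' : ℝ}

lemma pos (hb : 0 ≤ b) (hba : b < a) (hc : c < 1) (hk : 0 ≤ k) (h : OnCurve a b c k ρ Rbar) :
    0 < Rbar := by
  obtain ⟨hρ, hR, h⟩ := h
  have hs := phaseShift_nonneg hk (mul_nonneg (hb.trans hba.le) hρ)
  have hx : 0 ≤ a * Rbar + phaseShift k (a * ρ) := by nlinarith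
  have : cosh (b * Rbar + phaseShift k (a * ρ)) < cosh (a * Rbar + phaseShift k (a * ρ)) := by
    rw [h]
    exact mul_lt_of_lt_one_left (cosh_pos _) hc
  rw [cosh_lt_cosh, abs_of_nonneg hx] at this
  have := (le_abs_self _).trans_lt this
  exact pos_of_mul_pos_right (by linarith : 0 < (a - b) * Rbar) (sub_pos.mpr hba).le

lemma add_phaseShift_le (hb : 0 ≤ b) (hba : b < a) (hc : c < 1) (hk : 0 ≤ k)
    (h : OnCurve a b c k ρ Rbar) (h' : OnCurve a b c k ρ' Rbar') (hR : Rbar ≤ Rbar') :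
    a * Rbar' + phaseShift k (a * ρ') ≤ a * Rbar + phaseShift k (a * ρ) := by
  have hpos := h.pos hb hba hc hk
  obtain ⟨hρ, -, h⟩ := h
  obtain ⟨hρ', hR', h'⟩ := h'
  have hs := phaseShift_nonneg hk (mul_nonneg (hb.trans hba.le) hρ)
  have hs' := phaseShift_nonneg hk (mul_nonneg (hb.trans hba.le) hρ')
  rcases lt_or_ge (b * Rbar + phaseShift k (a * ρ)) (b * Rbar' + phaseShift k (a * ρ'))
    with hy | hy
  · have := sub_lt_sub_of_cosh_eq_mul_cosh (by positivity) hy (by nlinarith) h h'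
    nlinarith
  · have hc₀ : 0 < c := pos_of_mul_pos_left (h ▸ cosh_pos _) (cosh_pos _).le
    have : cosh (b * Rbar' + phaseShift k (a * ρ')) ≤
        cosh (b * Rbar + phaseShift k (a * ρ)) := by
      rw [cosh_le_cosh, abs_of_nonneg (by positivity), abs_of_nonneg (by positivity)]
      exact hy
    have hx : 0 ≤ a * Rbar + phaseShift k (a * ρ) := by nlinarith
    have hx' : 0 ≤ a * Rbar' + phaseShift k (a * ρ') := by nlinarith
    rwa [h, h', mul_le_mul_iff_right₀ hc₀, cosh_le_cosh, abs_of_nonneg hx,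
      abs_of_nonneg hx'] at this

lemma rbar_lt_of_lt (hb : 0 ≤ b) (hba : b < a) (hc : c < 1) (hk₀ : 0 < k) (hk₁ : k ≤ 1)
    (h : OnCurve a b c k ρ Rbar) (h' : OnCurve a b c k ρ' Rbar') (hρ : ρ < ρ') : Rbar' < Rbar := by
  have hpos := h.pos hb hba hc hk₀.le
  obtain ⟨hρ₀, -, h⟩ := h
  obtain ⟨-, -, h'⟩ := h'
  have hs := phaseShift_nonneg hk₀.le (mul_nonneg (hb.trans hba.le) hρ₀)
  have hss' := phaseShift_strictMono hk₀ hk₁ (mul_lt_mul_of_pos_left hρ (hb.trans_lt hba))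
  by_contra! hR
  have := sub_lt_sub_of_cosh_eq_mul_cosh (by positivity) (by nlinarith) (by nlinarith) h h'
  nlinarith

lemma add_le_add_of_le (hb : 0 ≤ b) (hba : b < a) (hc : c < 1) (hk₀ : 0 ≤ k) (hk₁ : k < 1)
    (h : OnCurve a b c k ρ Rbar) (h' : OnCurve a b c k ρ' Rbar') (hρ : ρ' ≤ ρ) :
    ρ' + Rbar' ≤ ρ + Rbar := by
  rcases le_or_gt Rbar' Rbar with hR | hR
  · linarith
  have hx := h.add_phaseShift_le hb hba hc hk₀ h' hR.le
  have hu := (strictMono_sub_phaseShift (by linarith) hk₁).monotone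
    (mul_le_mul_of_nonneg_left hρ (hb.trans hba.le))
  nlinarith

lemma add_lt_add_of_lt (hb : 0 ≤ b) (hba : b < a) (hc : c < 1) (hk₀ : 0 ≤ k) (hk₁ : k < 1)
    (h : OnCurve a b c k ρ Rbar) (h' : OnCurve a b c k ρ' Rbar') (hρ : ρ' < ρ) :
    ρ' + Rbar' < ρ + Rbar := by
  rcases le_or_gt Rbar' Rbar with hR | hR
  · linarith
  have hx := h.add_phaseShift_le hb hba hc hk₀ h' hR.le
  have hu := strictMono_sub_phaseShift (by linarith) hk₁
    (mul_lt_mul_of_pos_left hρ (hb.trans_lt hba))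
  nlinarith

end OnCurve

lemma onCurve_of_Fnec_eq_zero {lam cbar cB alpha k ρ Rbar : ℝ} (hρ : 0 ≤ ρ) (hR : 0 ≤ Rbar)
    (hk : |k| ≤ 1) (h : Fnec lam cbar cB alpha Rbar (k * tanh (√lam * ρ)) = 0) :
    OnCurve (√lam) (√lam * (1 - alpha)) (cbar / cB) k ρ Rbar := by
  rw [← tanh_phaseShift hk, Fnec_tanh_eq_zero_iff] at h
  exact ⟨hρ, hR, h⟩

section Parametrization

variable {a b c k R₁ : ℝ} {r : ℝ → ℝ}

lemma strictMonoOn_of_onCurve (hb : 0 ≤ b) (hba : b < a) (hc : c < 1) (hk₀ : 0 ≤ k)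
    (hk₁ : k < 1) (hr : ∀ R ∈ Ioi R₁, OnCurve a b c k (r R) (R - r R)) :
    StrictMonoOn r (Ioi R₁) := by
  intro R hR R' hR' hRR'
  by_contra! hle
  have := (hr R hR).add_le_add_of_le hb hba hc hk₀ hk₁ (hr R' hR') hle
  simp only [add_sub_cancel] at this
  linarith

lemma strictAntiOn_sub_of_onCurve (hb : 0 ≤ b) (hba : b < a) (hc : c < 1) (hk₀ : 0 < k)
    (hk₁ : k < 1) (hr : ∀ R ∈ Ioi R₁, OnCurve a b c k (r R) (R - r R)) :
    StrictAntiOn (fun R => R - r R) (Ioi R₁) := fun R hR R' hR' hRR' =>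
  (hr R hR).rbar_lt_of_lt hb hba hc hk₀ hk₁.le (hr R' hR')
    (strictMonoOn_of_onCurve hb hba hc hk₀.le hk₁ hr hR hR' hRR')

lemma tendsto_nhdsGT_of_onCurve (hb : 0 ≤ b) (hba : b < a) (hc : c < 1) (hk₀ : 0 ≤ k)
    (hk₁ : k < 1) (hR₁ : OnCurve a b c k 0 R₁)
    (hr : ∀ R ∈ Ioi R₁, OnCurve a b c k (r R) (R - r R)) : Tendsto r (𝓝[>] R₁) (𝓝 0) := by
  obtain ⟨L, hL⟩ : ∃ L, Tendsto r (𝓝[>] R₁) (𝓝 L) :=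
    ⟨_, (strictMonoOn_of_onCurve hb hba hc hk₀ hk₁ hr).monotoneOn.tendsto_nhdsGT
      ⟨0, by rintro _ ⟨R, hR, rfl⟩; exact (hr R hR).1⟩⟩
  have hLcurve : OnCurve a b c k L (R₁ - L) :=
    (isClosed_setOf_onCurve (abs_le.mpr ⟨by linarith, hk₁.le⟩)).mem_of_tendsto
      (hL.prodMk_nhds ((tendsto_nhdsWithin_of_tendsto_nhds tendsto_id).sub hL))
      (eventually_nhdsWithin_of_forall hr)
  obtain hL₀ | hL₀ := hLcurve.1.eq_or_lt
  · rwa [← hL₀] at hL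
  · have := hLcurve.add_lt_add_of_lt hb hba hc hk₀ hk₁ hR₁ hL₀
    linarith

end Parametrization

/-- For `R > R₁`, let `r R` be the necrotic core radius solving the nonlinear system
(with `R̄ = R - r R` and `β = √n_c tanh(√λ r R)`).  Then `r` is strictly increasing on
`(R₁, ∞)` with `r(R) → 0` as `R → R₁⁺`, and `R̄(R) = R - r(R)` is strictly decreasing
on `(R₁, ∞)`. -/
theorem stmt_9 (lam cbar cB alpha n_c R₁ : ℝ) (hlam : 0 < lam) (hcbar : 0 < cbar)
    (hc : cbar < cB) (halpha : alpha ∈ Set.Ioo (0 : ℝ) 1) (hn_c : n_c ∈ Set.Ioo (0 : ℝ) 1)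
    (hR₁pos : 0 < R₁)
    (hR₁ : Real.cosh (Real.sqrt lam * (1 - alpha) * R₁) / Real.cosh (Real.sqrt lam * R₁)
      = cbar / cB)
    (r : ℝ → ℝ)
    (hr : ∀ R, R₁ < R → 0 < r R ∧ r R < R ∧
      Fnec lam cbar cB alpha (R - r R)
        (Real.sqrt n_c * Real.tanh (Real.sqrt lam * r R)) = 0) :
    StrictMonoOn r (Set.Ioi R₁) ∧
    Filter.Tendsto r (nhdsWithin R₁ (Set.Ioi R₁)) (nhds 0) ∧
    StrictAntiOn (fun R => R - r R) (Set.Ioi R₁) := by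
  obtain ⟨hα₀, hα₁⟩ := halpha
  have hb : 0 ≤ √lam * (1 - alpha) := mul_nonneg (sqrt_nonneg lam) (by linarith)
  have hba : √lam * (1 - alpha) < √lam :=
    mul_lt_of_lt_one_right (sqrt_pos.mpr hlam) (by linarith)
  have hc₁ : cbar / cB < 1 := (div_lt_one (hcbar.trans hc)).mpr hc
  have hk₀ : 0 < √n_c := sqrt_pos.mpr hn_c.1
  have hk₁ : √n_c < 1 := by simpa using sqrt_lt_sqrt hn_c.1.le hn_c.2
  have hcurve : ∀ R ∈ Ioi R₁,
      OnCurve (√lam) (√lam * (1 - alpha)) (cbar / cB) (√n_c) (r R) (R - r R) := fun R hR =>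
    onCurve_of_Fnec_eq_zero (hr R hR).1.le (by linarith [(hr R hR).2.1])
      (abs_le.mpr ⟨by linarith, hk₁.le⟩) (hr R hR).2.2
  have hR₁curve : OnCurve (√lam) (√lam * (1 - alpha)) (cbar / cB) (√n_c) 0 R₁ := by
    rw [div_eq_iff (cosh_pos _).ne'] at hR₁
    exact ⟨le_rfl, hR₁pos.le, by simpa using hR₁⟩
  exact ⟨strictMonoOn_of_onCurve hb hba hc₁ hk₀.le hk₁ hcurve,
    tendsto_nhdsGT_of_onCurve hb hba hc₁ hk₀.le hk₁ hR₁curve hcurve,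
    strictAntiOn_sub_of_onCurve hb hba hc₁ hk₀ hk₁ hcurve⟩
end
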